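/- arXiv:1510.04976 — 3 statements merged into one kernel-verified Lean document; each statement's English description precedes it below -/
import Mathlib

section
/- Let γ > 0, α ∈ ℝ, and define r(λ) = -z·(2ψ'(1+z)·z² - 2z + 1) / (γ·(4πα - γ·(ψ(1+z) - log z - 1/(2z) - ψ(1) - ψ(2)))) evaluated at z = γ/(2√(-λ)), for λ < 0 real with |λ| small. Then r(λ) → -1/(3γ·(γ - 2Cγ + 4πα)) as λ → 0⁻, where C is the Euler–Mascheroni constant, provided γ - 2Cγ + 4πα ≠ 0. -/
/-!
On the real axis `z = x > 0` everything is real, with `ψ = logDeriv Γ` and `ψ' = deriv ψ`, and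
`z = γ / (2√(-λ)) → +∞`. Log-convexity of `Γ` traps `ψ (x + 1)` between `log x` and
`log (x + 1)`, so the denominator tends to `γ (γ - 2Cγ + 4πα)`. The numerator needs `ψ'` to third
order: from `ψ (x + 1) = ψ x + 1 / x` and `harmonic n - log n → C` one gets
`ψ x + C = ∑ (1 / (n + 1) - 1 / (n + x))`, hence `ψ' y = ∑ 1 / (n + y)²`. Comparing `1 / a²` with
the telescoping `1 / (a² - 1/4) = 1 / (a - 1/2) - 1 / (a + 1/2)`, and bounding the difference by
telescoping cubes, gives `1 / (12 y³) ≤ 1 / (y - 1/2) - ψ' y ≤ 1 / (12 (y - 1/2)³)`, so that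
`x (2 x² ψ' (x + 1) - 2 x + 1) → 1/2 - 1/6 = 1/3`.
-/

open Filter Real

/-- The digamma function `ψ(z) = Γ'(z)/Γ(z)`. -/
noncomputable def digamma (z : ℂ) : ℂ := deriv Complex.Gamma z / Complex.Gamma z

/-- The trigamma function `ψ'(z)`, the derivative of the digamma function. -/
noncomputable def trigamma (z : ℂ) : ℂ := deriv digamma z

/-- The relative trace of the resolvent, as a function of `z = γ/(2√(-λ))`. -/
noncomputable def relTrace (γ α : ℝ) (z : ℂ) : ℂ :=
  -z * (2 * trigamma (1 + z) * z ^ 2 - 2 * z + 1) /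
    ((γ : ℂ) * (4 * (Real.pi : ℂ) * (α : ℂ) -
      (γ : ℂ) * (digamma (1 + z) - Complex.log z - 1 / (2 * z) - digamma 1 - digamma 2)))

open Topology

lemma hasSum_sub_succ_of_antitone {f : ℕ → ℝ} (hf : Antitone f) (hlim : Tendsto f atTop (𝓝 0)) :
    HasSum (fun n ↦ f n - f (n + 1)) (f 0) := by
  rw [hasSum_iff_tendsto_nat_of_nonneg fun n ↦ sub_nonneg.mpr (hf n.le_succ)]
  simp only [Finset.sum_range_sub']
  simpa using tendsto_const_nhds.sub hlim

lemma hasSum_inv_pow_sub_inv_pow {k : ℕ} (hk : k ≠ 0) {b : ℝ} (hb : 0 < b) :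
    HasSum (fun n : ℕ ↦ ((n + b)⁻¹) ^ k - ((n + 1 + b)⁻¹) ^ k) ((b⁻¹) ^ k) := by
  have hf : Antitone fun n : ℕ ↦ (((n : ℝ) + b)⁻¹) ^ k := fun m n hmn ↦
    pow_le_pow_left₀ (by positivity) (inv_anti₀ (by positivity) (by gcongr)) k
  have hlim : Tendsto (fun n : ℕ ↦ (((n : ℝ) + b)⁻¹) ^ k) atTop (𝓝 0) := by
    simpa [zero_pow hk] using
      ((tendsto_atTop_add_const_right _ b tendsto_natCast_atTop_atTop).inv_tendsto_atTop.pow k)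
  simpa [add_right_comm] using hasSum_sub_succ_of_antitone hf hlim

lemma tendsto_mul_inv_add_const_atTop (c : ℝ) : Tendsto (fun x ↦ x * (x + c)⁻¹) atTop (𝓝 1) := by
  have h : Tendsto (fun x ↦ 1 - c * (x + c)⁻¹) atTop (𝓝 1) := by
    simpa using tendsto_const_nhds.sub
      ((tendsto_atTop_add_const_right _ c tendsto_id).inv_tendsto_atTop.const_mul c)
  refine h.congr' ?_
  filter_upwards [eventually_gt_atTop (-c)] with x hx
  have : x + c ≠ 0 := by linarith
  field_simp
  ring

lemma inv_sq_sub_quarter {a : ℝ} (ha : 1 / 2 < a) :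
    (a ^ 2 - 1 / 4)⁻¹ = (a - 1 / 2)⁻¹ - (a + 1 / 2)⁻¹ := by
  rw [inv_sub_inv (by linarith) (by linarith), add_sub_sub_cancel, add_halves, one_div]
  ring

lemma inv_pow_three_sub_le {a : ℝ} (ha : 1 / 2 < a) :
    ((a⁻¹) ^ 3 - ((a + 1)⁻¹) ^ 3) / 12 ≤ (a ^ 2 - 1 / 4)⁻¹ - (a ^ 2)⁻¹ := by
  have h3 : 0 < a ^ 2 - 1 / 4 := by nlinarith
  rw [inv_pow, inv_pow, inv_sub_inv (by positivity) (by positivity),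
    inv_sub_inv (by positivity) (by positivity), div_div,
    div_le_div_iff₀ (by positivity) (by positivity)]
  nlinarith [sq_nonneg a, pow_pos (show (0 : ℝ) < a by linarith) 3]

lemma le_inv_pow_three_sub {a : ℝ} (ha : 1 / 2 < a) :
    (a ^ 2 - 1 / 4)⁻¹ - (a ^ 2)⁻¹ ≤ (((a - 1 / 2)⁻¹) ^ 3 - ((a + 1 / 2)⁻¹) ^ 3) / 12 := by
  have h1 : 0 < a - 1 / 2 := by linarith
  have h3 : 0 < a ^ 2 - 1 / 4 := by nlinarith
  rw [inv_pow, inv_pow, inv_sub_inv (by positivity) (by positivity),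
    inv_sub_inv (by positivity) (by positivity), div_div,
    div_le_div_iff₀ (by positivity) (by positivity)]
  nlinarith [sq_nonneg a, pow_pos (show (0 : ℝ) < a by linarith) 3]

namespace Real

lemma differentiableAt_Gamma_of_pos {x : ℝ} (hx : 0 < x) : DifferentiableAt ℝ Gamma x :=
  differentiableAt_Gamma fun m ↦ by linarith [m.cast_nonneg (α := ℝ)]

lemma log_Gamma_add_one {x : ℝ} (hx : 0 < x) :
    log (Gamma (x + 1)) = log (Gamma x) + log x := by
  rw [Gamma_add_one hx.ne', log_mul hx.ne' (Gamma_pos_of_pos hx).ne', add_comm]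

lemma deriv_log_Gamma {x : ℝ} (hx : 0 < x) : deriv (log ∘ Gamma) x = logDeriv Gamma x :=
  deriv_log_comp_eq_logDeriv (differentiableAt_Gamma_of_pos hx) (Gamma_pos_of_pos hx).ne'

lemma differentiableAt_log_Gamma {x : ℝ} (hx : 0 < x) : DifferentiableAt ℝ (log ∘ Gamma) x :=
  (differentiableAt_Gamma_of_pos hx).log (Gamma_pos_of_pos hx).ne'

lemma logDeriv_Gamma_one : logDeriv Gamma 1 = -eulerMascheroniConstant := by
  rw [logDeriv_apply, hasDerivAt_Gamma_one.deriv, Gamma_one, div_one]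

lemma logDeriv_Gamma_add_one {x : ℝ} (hx : 0 < x) :
    logDeriv Gamma (x + 1) = logDeriv Gamma x + x⁻¹ := by
  have hshift : Gamma ∘ (· + 1) =ᶠ[𝓝 x] fun y ↦ y * Gamma y := by
    filter_upwards [eventually_gt_nhds hx] with y hy using Gamma_add_one hy.ne'
  have h := logDeriv_comp (f := Gamma) (g := (· + 1)) (x := x)
    (differentiableAt_Gamma_of_pos (by linarith)) (by fun_prop)
  rw [(logDeriv_congr_nhds hshift).eq_of_nhds, logDeriv_mul (f := fun y ↦ y) x hx.ne'
    (Gamma_pos_of_pos hx).ne' differentiableAt_fun_id (differentiableAt_Gamma_of_pos hx)] at h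
  simp only [deriv_add_const, deriv_id'', mul_one] at h
  rw [← h, logDeriv_id', one_div, add_comm]

lemma logDeriv_Gamma_add_nat {x : ℝ} (hx : 0 < x) (N : ℕ) :
    logDeriv Gamma (x + N) = logDeriv Gamma x + ∑ k ∈ Finset.range N, (x + k)⁻¹ := by
  induction N with
  | zero => simp
  | succ N ih =>
    rw [Nat.cast_succ, ← add_assoc, logDeriv_Gamma_add_one (by positivity), ih,
      Finset.sum_range_succ, add_assoc]

lemma log_le_logDeriv_Gamma_add_one {x : ℝ} (hx : 0 < x) :
    log x ≤ logDeriv Gamma (x + 1) := by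
  have h := convexOn_log_Gamma.slope_le_deriv (Set.mem_Ioi.mpr hx)
    (Set.mem_Ioi.mpr (by linarith : 0 < x + 1)) (by linarith)
    (differentiableAt_log_Gamma (by linarith))
  rwa [slope_def_field, add_sub_cancel_left, div_one, Function.comp_apply, Function.comp_apply,
    log_Gamma_add_one hx, add_sub_cancel_left, deriv_log_Gamma (by linarith)] at h

lemma logDeriv_Gamma_add_one_le_log {x : ℝ} (hx : 0 < x) :
    logDeriv Gamma (x + 1) ≤ log (x + 1) := by
  have h := convexOn_log_Gamma.deriv_le_slope (Set.mem_Ioi.mpr (by linarith : 0 < x + 1))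
    (Set.mem_Ioi.mpr (by linarith : 0 < x + 1 + 1)) (by linarith)
    (differentiableAt_log_Gamma (by linarith))
  rwa [slope_def_field, add_sub_cancel_left, div_one, Function.comp_apply, Function.comp_apply,
    log_Gamma_add_one (by linarith), add_sub_cancel_left, deriv_log_Gamma (by linarith)] at h

lemma tendsto_logDeriv_Gamma_add_one_sub_log :
    Tendsto (fun x ↦ logDeriv Gamma (x + 1) - log x) atTop (𝓝 0) := by
  refine tendsto_of_tendsto_of_tendsto_of_le_of_le' tendsto_const_nhds
    (tendsto_log_comp_add_sub_log 1) ?_ ?_ <;>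
  filter_upwards [eventually_gt_atTop 0] with x hx
  · linarith [log_le_logDeriv_Gamma_add_one hx]
  · linarith [logDeriv_Gamma_add_one_le_log hx]

lemma tendsto_logDeriv_Gamma_add_nat_sub_log (x : ℝ) :
    Tendsto (fun N : ℕ ↦ logDeriv Gamma (x + N) - log N) atTop (𝓝 0) := by
  have hshift : Tendsto (fun N : ℕ ↦ (N : ℝ) + (x - 1)) atTop atTop :=
    tendsto_atTop_add_const_right _ _ tendsto_natCast_atTop_atTop
  have h := (tendsto_logDeriv_Gamma_add_one_sub_log.comp hshift).add
    ((tendsto_log_comp_add_sub_log (x - 1)).comp tendsto_natCast_atTop_atTop)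
  rw [add_zero] at h
  refine h.congr fun N ↦ ?_
  simp only [Function.comp_apply]
  ring_nf

lemma hasSum_logDeriv_Gamma {x : ℝ} (hx : 1 ≤ x) :
    HasSum (fun n : ℕ ↦ ((n : ℝ) + 1)⁻¹ - ((n : ℝ) + x)⁻¹)
      (logDeriv Gamma x + eulerMascheroniConstant) := by
  have hterm (n : ℕ) : 0 ≤ ((n : ℝ) + 1)⁻¹ - ((n : ℝ) + x)⁻¹ :=
    sub_nonneg.mpr (inv_anti₀ (by positivity) (by linarith))
  have hpartial (N : ℕ) : ∑ n ∈ Finset.range N, (((n : ℝ) + 1)⁻¹ - ((n : ℝ) + x)⁻¹) =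
      (harmonic N - log N) - (logDeriv Gamma (x + N) - log N) + logDeriv Gamma x := by
    rw [Finset.sum_sub_distrib, logDeriv_Gamma_add_nat (by linarith), harmonic]
    push_cast
    simp only [add_comm (x : ℝ)]
    ring
  rw [hasSum_iff_tendsto_nat_of_nonneg hterm, funext hpartial]
  simpa [add_comm] using
    ((tendsto_harmonic_sub_log.sub (tendsto_logDeriv_Gamma_add_nat_sub_log x)).add_const
      (logDeriv Gamma x))

lemma inv_nat_add_sq_le {y : ℝ} (hy : 1 ≤ y) (n : ℕ) :
    (((n : ℝ) + y) ^ 2)⁻¹ ≤ (((n : ℝ) + 1) ^ 2)⁻¹ :=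
  inv_anti₀ (by positivity) (pow_le_pow_left₀ (by positivity) (by linarith) 2)

lemma summable_inv_nat_add_sq {y : ℝ} (hy : 1 ≤ y) :
    Summable fun n : ℕ ↦ (((n : ℝ) + y) ^ 2)⁻¹ :=
  .of_nonneg_of_le (fun _ ↦ by positivity) (inv_nat_add_sq_le hy)
    (by simpa using (summable_nat_add_iff 1).mpr (summable_nat_pow_inv.mpr one_lt_two))

lemma hasDerivAt_logDeriv_Gamma {y : ℝ} (hy : 1 < y) :
    HasDerivAt (logDeriv Gamma) (∑' n : ℕ, (((n : ℝ) + y) ^ 2)⁻¹) y := by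
  have hderiv (n : ℕ) (z : ℝ) (hz : z ∈ Set.Ioi 1) :
      HasDerivAt (fun w ↦ ((n : ℝ) + 1)⁻¹ - ((n : ℝ) + w)⁻¹) (((n : ℝ) + z) ^ 2)⁻¹ z := by
    have hz0 : (n : ℝ) + z ≠ 0 := by have : (1 : ℝ) < z := hz; positivity
    simpa using ((hasDerivAt_inv hz0).comp_const_add (n : ℝ) z).const_sub ((n : ℝ) + 1)⁻¹
  have hbound (n : ℕ) (z : ℝ) (hz : z ∈ Set.Ioi 1) :
      ‖(((n : ℝ) + z) ^ 2)⁻¹‖ ≤ (((n : ℝ) + 1) ^ 2)⁻¹ := by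
    rw [Real.norm_of_nonneg (by positivity)]
    exact inv_nat_add_sq_le (le_of_lt hz) n
  have hseries := hasDerivAt_tsum_of_isPreconnected (summable_inv_nat_add_sq le_rfl) isOpen_Ioi
    isPreconnected_Ioi hderiv hbound hy (hasSum_logDeriv_Gamma hy.le).summable hy
  refine (hseries.sub_const eulerMascheroniConstant).congr_of_eventuallyEq ?_
  filter_upwards [eventually_gt_nhds hy] with z hz
  rw [(hasSum_logDeriv_Gamma hz.le).tsum_eq, add_sub_cancel_right]

lemma hasSum_deriv_logDeriv_Gamma {y : ℝ} (hy : 1 < y) :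
    HasSum (fun n : ℕ ↦ (((n : ℝ) + y) ^ 2)⁻¹) (deriv (logDeriv Gamma) y) :=
  (hasDerivAt_logDeriv_Gamma hy).deriv ▸ (summable_inv_nat_add_sq hy.le).hasSum

lemma deriv_logDeriv_Gamma_mem_Icc {y : ℝ} (hy : 1 < y) :
    deriv (logDeriv Gamma) y ∈
      Set.Icc ((y - 1 / 2)⁻¹ - ((y - 1 / 2)⁻¹) ^ 3 / 12) ((y - 1 / 2)⁻¹ - (y⁻¹) ^ 3 / 12) := by
  have hterm (n : ℕ) : 1 / 2 < (n : ℝ) + y := by linarith [n.cast_nonneg (α := ℝ)]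
  have htelescope : HasSum (fun n : ℕ ↦ (((n : ℝ) + y) ^ 2 - 1 / 4)⁻¹) (y - 1 / 2)⁻¹ := by
    convert (hasSum_inv_pow_sub_inv_pow one_ne_zero (b := y - 1 / 2) (by linarith)).congr_fun ?_
      using 1
    · rw [pow_one]
    · intro n
      rw [inv_sq_sub_quarter (hterm n)]
      ring_nf
  have herror := htelescope.sub (hasSum_deriv_logDeriv_Gamma hy)
  have hcubes := (hasSum_inv_pow_sub_inv_pow three_ne_zero (b := y) (by linarith)).div_const 12
  have hcubes_shifted :=
    (hasSum_inv_pow_sub_inv_pow three_ne_zero (b := y - 1 / 2) (by linarith)).div_const 12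
  constructor
  · have := hasSum_le (fun n ↦ ?_) herror hcubes_shifted
    · linarith
    have h := le_inv_pow_three_sub (hterm n)
    rwa [show (n : ℝ) + y - 1 / 2 = n + (y - 1 / 2) by ring,
      show (n : ℝ) + y + 1 / 2 = n + 1 + (y - 1 / 2) by ring] at h
  · have := hasSum_le (fun n ↦ ?_) hcubes herror
    · linarith
    have h := inv_pow_three_sub_le (hterm n)
    rwa [add_right_comm] at h

lemma tendsto_deriv_logDeriv_Gamma :
    Tendsto (fun x ↦ x * (2 * deriv (logDeriv Gamma) (x + 1) * x ^ 2 - 2 * x + 1)) atTop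
      (𝓝 (1 / 3)) := by
  have hexpand {x t : ℝ} (hx : 0 < x) : x * (2 * t * x ^ 2 - 2 * x + 1) =
      x * (x + 1 / 2)⁻¹ / 2 - 2 * x ^ 3 * ((x + 1 / 2)⁻¹ - t) := by
    have hA : (x + 1 / 2) * (x + 1 / 2)⁻¹ = 1 := mul_inv_cancel₀ (by positivity)
    linear_combination (2 * x ^ 2 - x) * hA
  have hlim (c : ℝ) : Tendsto (fun x ↦ x * (x + 1 / 2)⁻¹ / 2 - (x * (x + c)⁻¹) ^ 3 / 6) atTop
      (𝓝 (1 / 3)) := by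
    have := ((tendsto_mul_inv_add_const_atTop (1 / 2)).div_const 2).sub
      (((tendsto_mul_inv_add_const_atTop c).pow 3).div_const 6)
    norm_num at this
    exact this
  refine tendsto_of_tendsto_of_tendsto_of_le_of_le' (hlim (1 / 2)) (hlim 1) ?_ ?_ <;>
  filter_upwards [eventually_gt_atTop 0] with x hx <;>
  obtain ⟨hlow, hup⟩ := deriv_logDeriv_Gamma_mem_Icc (by linarith : 1 < x + 1) <;>
  rw [show x + 1 - 1 / 2 = x + 1 / 2 by ring] at hlow hup <;>
  rw [hexpand hx, mul_pow, sub_le_sub_iff_left]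
  · nlinarith [mul_le_mul_of_nonneg_left (sub_le_comm.mp hlow) (pow_pos hx 3).le]
  · nlinarith [mul_le_mul_of_nonneg_left (le_sub_comm.mp hup) (pow_pos hx 3).le]

end Real

namespace Complex

lemma deriv_eq_ofReal_of_hasDerivAt {f : ℂ → ℂ} {g : ℝ → ℝ} {x g' : ℝ}
    (hf : DifferentiableAt ℂ f x) (hfg : ∀ᶠ t : ℝ in 𝓝 x, f t = g t) (hg : HasDerivAt g g' x) :
    deriv f x = g' :=
  hf.hasDerivAt.comp_ofReal.unique (hg.ofReal_comp.congr_of_eventuallyEq hfg)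

lemma ne_neg_natCast_of_re_pos {s : ℂ} (hs : 0 < s.re) (m : ℕ) : s ≠ -m := by
  rintro rfl
  simp only [neg_re, natCast_re, Left.neg_pos_iff] at hs
  exact hs.not_ge m.cast_nonneg

lemma analyticAt_Gamma_of_re_pos {s : ℂ} (hs : 0 < s.re) : AnalyticAt ℂ Gamma s :=
  DifferentiableOn.analyticAt
    (fun w hw ↦ (differentiableAt_Gamma w (ne_neg_natCast_of_re_pos hw)).differentiableWithinAt)
    ((isOpen_lt continuous_const continuous_re).mem_nhds hs)

end Complex

lemma differentiableAt_digamma_of_re_pos {s : ℂ} (hs : 0 < s.re) : DifferentiableAt ℂ digamma s :=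
  ((Complex.analyticAt_Gamma_of_re_pos hs).deriv.div (Complex.analyticAt_Gamma_of_re_pos hs)
    (Complex.Gamma_ne_zero (Complex.ne_neg_natCast_of_re_pos hs))).differentiableAt

lemma digamma_ofReal {x : ℝ} (hx : 0 < x) : digamma x = logDeriv Real.Gamma x := by
  rw [digamma, Complex.deriv_eq_ofReal_of_hasDerivAt
    (Complex.differentiableAt_Gamma _ (Complex.ne_neg_natCast_of_re_pos (by simpa)))
    (.of_forall Complex.Gamma_ofReal) (Real.differentiableAt_Gamma_of_pos hx).hasDerivAt,
    Complex.Gamma_ofReal, logDeriv_apply, Complex.ofReal_div]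

lemma trigamma_ofReal {y : ℝ} (hy : 1 < y) : trigamma y = deriv (logDeriv Real.Gamma) y :=
  Complex.deriv_eq_ofReal_of_hasDerivAt
    (differentiableAt_digamma_of_re_pos (by rw [Complex.ofReal_re]; linarith))
    (by filter_upwards [eventually_gt_nhds (by linarith : 0 < y)] with t ht
        using digamma_ofReal ht)
    (Real.hasDerivAt_logDeriv_Gamma hy).differentiableAt.hasDerivAt

lemma digamma_one : digamma 1 = -eulerMascheroniConstant := by
  simpa [Real.logDeriv_Gamma_one] using digamma_ofReal one_pos

lemma digamma_two : digamma 2 = 1 - eulerMascheroniConstant := by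
  rw [← one_add_one_eq_two, ← Complex.ofReal_one, ← Complex.ofReal_add,
    digamma_ofReal (by norm_num), Real.logDeriv_Gamma_add_one one_pos, Real.logDeriv_Gamma_one]
  push_cast
  ring

lemma relTrace_ofReal (γ α : ℝ) {x : ℝ} (hx : 0 < x) :
    relTrace γ α x =
      ((-x * (2 * deriv (logDeriv Gamma) (x + 1) * x ^ 2 - 2 * x + 1) /
        (γ * (4 * π * α - γ * (logDeriv Gamma (x + 1) - log x - 1 / (2 * x)
          + 2 * eulerMascheroniConstant - 1))) : ℝ) : ℂ) := by
  rw [relTrace, digamma_one, digamma_two, add_comm 1 (x : ℂ), ← Complex.ofReal_one,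
    ← Complex.ofReal_add, trigamma_ofReal (by linarith), digamma_ofReal (by linarith),
    ← Complex.ofReal_log hx.le]
  push_cast
  ring

lemma tendsto_relTrace_ofReal_atTop {γ α : ℝ} (hγ : γ ≠ 0)
    (hne : γ - 2 * eulerMascheroniConstant * γ + 4 * π * α ≠ 0) :
    Tendsto (fun x : ℝ ↦ relTrace γ α x) atTop
      (𝓝 ((-1 / (3 * γ * (γ - 2 * eulerMascheroniConstant * γ + 4 * π * α)) : ℝ) : ℂ)) := by
  have hnum := Real.tendsto_deriv_logDeriv_Gamma.neg
  have hden : Tendsto (fun x ↦ γ * (4 * π * α - γ * (logDeriv Gamma (x + 1) - log x - 1 / (2 * x)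
      + 2 * eulerMascheroniConstant - 1))) atTop
      (𝓝 (γ * (γ - 2 * eulerMascheroniConstant * γ + 4 * π * α))) := by
    have h := ((((Real.tendsto_logDeriv_Gamma_add_one_sub_log.sub
      (tendsto_inv_atTop_zero.const_mul 2⁻¹)).add_const (2 * eulerMascheroniConstant)).sub_const
      1).const_mul γ |>.const_sub (4 * π * α)).const_mul γ
    convert h using 2
    · simp [mul_comm]
    · ring
  have hval : -(1 / 3) / (γ * (γ - 2 * eulerMascheroniConstant * γ + 4 * π * α)) =
      -1 / (3 * γ * (γ - 2 * eulerMascheroniConstant * γ + 4 * π * α)) := by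
    rw [neg_div, neg_div, div_div, ← mul_assoc]
  rw [← hval]
  refine ((Complex.continuous_ofReal.tendsto _).comp (hnum.div hden (mul_ne_zero hγ hne))).congr' ?_
  filter_upwards [eventually_gt_atTop 0] with x hx
  rw [Function.comp_apply, relTrace_ofReal γ α hx, neg_mul, Pi.div_apply]

lemma tendsto_div_two_sqrt_neg_nhdsLT_zero {γ : ℝ} (hγ : 0 < γ) :
    Tendsto (fun l : ℝ ↦ γ / (2 * √(-l))) (𝓝[<] 0) atTop := by
  have hsqrt : Tendsto (fun l : ℝ ↦ 2 * √(-l)) (𝓝[<] 0) (𝓝[>] 0) := by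
    refine tendsto_nhdsWithin_iff.mpr ⟨?_, ?_⟩
    · have h : Continuous fun l : ℝ ↦ 2 * √(-l) := by fun_prop
      simpa using (h.tendsto 0).mono_left nhdsWithin_le_nhds
    · filter_upwards [self_mem_nhdsWithin] with l (hl : l < 0)
      exact Set.mem_Ioi.mpr (mul_pos two_pos (sqrt_pos.mpr (neg_pos.mpr hl)))
  simpa [div_eq_mul_inv] using hsqrt.inv_tendsto_nhdsGT_zero.const_mul_atTop hγ

theorem stmt9 (γ α : ℝ) (hγ : 0 < γ)
    (hne : γ - 2 * Real.eulerMascheroniConstant * γ + 4 * Real.pi * α ≠ 0) :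
    Tendsto (fun l : ℝ => relTrace γ α ((γ : ℂ) / (2 * (Real.sqrt (-l) : ℂ))))
      (nhdsWithin 0 (Set.Iio 0))
      (nhds ((-1 / (3 * γ * (γ - 2 * Real.eulerMascheroniConstant * γ + 4 * Real.pi * α)) : ℝ) : ℂ)) := by
  refine ((tendsto_relTrace_ofReal_atTop hγ.ne' hne).comp
    (tendsto_div_two_sqrt_neg_nhdsLT_zero hγ)).congr fun l ↦ ?_
  simp
end

section
/- For x > 0, the function ψ(1+x) - log x - 1/(2x) is strictly increasing in x and tends to 0 as x → +∞; in particular ψ(1+x) < log x + 1/(2x) for all x > 0. -/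
open Filter

/-- The real digamma function `ψ(x) = Γ'(x)/Γ(x)`. -/
noncomputable def realDigamma (x : ℝ) : ℝ := deriv Real.Gamma x / Real.Gamma x

/-!
Write `E(x) = ψ(1+x) - log x - 1/(2x)`. Convexity of `log Γ` squeezes `ψ(1+x)` between `log x`
and `log (1+x)`, so `E(x) → 0`. By `ψ(x+1) = ψ(x) + 1/x`, the forward difference `E(x+1) - E(x)`
is the error `1/(2x) + 1/(2(x+1)) - ∫ₓ^{x+1} dt/t` of the trapezoidal rule for `1/t`, whose
derivative is `-(1/x - 1/(x+1))²/2 < 0`. A function tending to a limit whose forward difference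
is strictly decreasing is strictly increasing: telescope `E(y) - E(x)` against the sums
`∑ₙ (E(x+n+1) - E(x+n)) - (E(y+n+1) - E(y+n))` of positive terms.
-/

open Real Set Topology

theorem ne_neg_natCast_of_pos {x : ℝ} (hx : 0 < x) (m : ℕ) : x ≠ -m := by
  linarith [(Nat.cast_nonneg m : (0 : ℝ) ≤ m)]

theorem hasDerivAt_log_comp_Gamma {x : ℝ} (hx : ∀ m : ℕ, x ≠ -m) :
    HasDerivAt (log ∘ Gamma) (realDigamma x) x :=
  (differentiableAt_Gamma hx).hasDerivAt.log (Gamma_ne_zero hx)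

theorem realDigamma_add_one {x : ℝ} (hx : ∀ m : ℕ, x ≠ -m) :
    realDigamma (x + 1) = realDigamma x + 1 / x := by
  have hx0 : x ≠ 0 := by simpa using hx 0
  have hshift : HasDerivAt (fun y => Gamma (y + 1)) (Gamma x + x * deriv Gamma x) x := by
    refine ((hasDerivAt_id x).mul (differentiableAt_Gamma hx).hasDerivAt).congr_of_eventuallyEq ?_
      |>.congr_deriv (by simp)
    filter_upwards [eventually_ne_nhds hx0] with y hy using Gamma_add_one hy
  have hderiv : deriv Gamma (x + 1) = Gamma x + x * deriv Gamma x := by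
    rw [← hshift.deriv, deriv_comp_add_const]
  rw [realDigamma, realDigamma, hderiv, Gamma_add_one hx0]
  field_simp [Gamma_ne_zero hx]
  ring

theorem slope_log_comp_Gamma_add_one {x : ℝ} (hx : ∀ m : ℕ, x ≠ -m) :
    slope (log ∘ Gamma) x (x + 1) = log x := by
  have hx0 : x ≠ 0 := by simpa using hx 0
  rw [slope_def_field, add_sub_cancel_left, div_one, Function.comp_apply, Function.comp_apply,
    Gamma_add_one hx0, log_mul hx0 (Gamma_ne_zero hx), add_sub_cancel_right]

theorem realDigamma_le_log {x : ℝ} (hx : 0 < x) : realDigamma x ≤ log x := by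
  rw [← slope_log_comp_Gamma_add_one (ne_neg_natCast_of_pos hx)]
  exact convexOn_log_Gamma.le_slope_of_hasDerivAt hx (mem_Ioi.2 (by linarith)) (lt_add_one x)
    (hasDerivAt_log_comp_Gamma (ne_neg_natCast_of_pos hx))

theorem log_le_realDigamma_add_one {x : ℝ} (hx : 0 < x) : log x ≤ realDigamma (x + 1) := by
  rw [← slope_log_comp_Gamma_add_one (ne_neg_natCast_of_pos hx)]
  exact convexOn_log_Gamma.slope_le_of_hasDerivAt hx (mem_Ioi.2 (by linarith)) (lt_add_one x)
    (hasDerivAt_log_comp_Gamma (ne_neg_natCast_of_pos (by linarith)))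

noncomputable def digammaAsymptoticError (x : ℝ) : ℝ := realDigamma (1 + x) - log x - 1 / (2 * x)

theorem tendsto_digammaAsymptoticError_atTop :
    Tendsto digammaAsymptoticError atTop (𝓝 0) := by
  have hinv : Tendsto (fun x : ℝ => 1 / (2 * x)) atTop (𝓝 0) :=
    tendsto_const_nhds.div_atTop (tendsto_id.const_mul_atTop two_pos)
  have hlower : Tendsto (fun x : ℝ => -(1 / (2 * x))) atTop (𝓝 0) := by simpa using hinv.neg
  have hupper : Tendsto (fun x : ℝ => log (x + 1) - log x - 1 / (2 * x)) atTop (𝓝 0) := by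
    simpa using (tendsto_log_comp_add_sub_log 1).sub hinv
  refine tendsto_of_tendsto_of_tendsto_of_le_of_le' hlower hupper ?_ ?_ <;>
    filter_upwards [eventually_gt_atTop 0] with x hx <;> rw [digammaAsymptoticError, add_comm]
  · linarith [log_le_realDigamma_add_one hx]
  · linarith [realDigamma_le_log (by linarith : 0 < x + 1)]

theorem fwdDiff_digammaAsymptoticError {x : ℝ} (hx : 0 < x) :
    fwdDiff 1 digammaAsymptoticError x =
      1 / (2 * x) + 1 / (2 * (x + 1)) - (log (x + 1) - log x) := by
  rw [fwdDiff, digammaAsymptoticError, digammaAsymptoticError, ← add_assoc,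
    realDigamma_add_one (ne_neg_natCast_of_pos (by linarith))]
  field_simp
  ring

theorem strictAntiOn_trapezoid_sub_integral_inv :
    StrictAntiOn (fun x : ℝ => 1 / (2 * x) + 1 / (2 * (x + 1)) - (log (x + 1) - log x))
      (Ioi 0) := by
  have hderiv {x : ℝ} (hx : 0 < x) : HasDerivAt
      (fun x : ℝ => 1 / (2 * x) + 1 / (2 * (x + 1)) - (log (x + 1) - log x))
      (-(1 / x - 1 / (x + 1)) ^ 2 / 2) x := by
    have hx1 : x + 1 ≠ 0 := by positivity
    have h := ((((hasDerivAt_id x).const_mul 2).inv (by positivity)).add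
      ((((hasDerivAt_id x).add_const 1).const_mul 2).inv (by positivity))).sub
      ((((hasDerivAt_id x).add_const 1).log hx1).sub (hasDerivAt_log hx.ne'))
    refine (h.congr_deriv ?_).congr_of_eventuallyEq (.of_forall fun y => ?_)
    · simp only [id]
      field_simp
      ring
    · simp [one_div]
  refine strictAntiOn_of_deriv_neg (convex_Ioi 0)
    (fun x hx => (hderiv hx).continuousAt.continuousWithinAt) fun x hx => ?_
  rw [interior_Ioi] at hx
  have hgap : 0 < 1 / x - 1 / (x + 1) := by
    rw [sub_pos]
    exact one_div_lt_one_div_of_lt hx (lt_add_one x)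
  rw [(hderiv hx).deriv]
  nlinarith

theorem strictMonoOn_of_tendsto_of_strictAntiOn_fwdDiff {g : ℝ → ℝ} {a l : ℝ}
    (hg : Tendsto g atTop (𝓝 l)) (hd : StrictAntiOn (fwdDiff 1 g) (Ioi a)) :
    StrictMonoOn g (Ioi a) := by
  intro x hx y hy hxy
  set d := fwdDiff 1 g
  have hpos (n : ℕ) : 0 < d (x + n) - d (y + n) :=
    have hn : (0 : ℝ) ≤ n := n.cast_nonneg
    sub_pos.2 <| hd (show a < x + n by linarith [mem_Ioi.1 hx])
      (show a < y + n by linarith [mem_Ioi.1 hy]) (by linarith)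
  have htelescope (z : ℝ) (N : ℕ) : ∑ n ∈ Finset.range N, d (z + n) = g (z + N) - g z := by
    simpa [d, fwdDiff, add_assoc] using Finset.sum_range_sub (fun n : ℕ => g (z + n)) N
  have hshift (z : ℝ) : Tendsto (fun N : ℕ => g (z + N)) atTop (𝓝 l) :=
    hg.comp (tendsto_atTop_add_const_left _ _ tendsto_natCast_atTop_atTop)
  have hsum : Tendsto (fun N : ℕ => ∑ n ∈ Finset.range N, (d (x + n) - d (y + n))) atTop
      (𝓝 (g y - g x)) := by
    simp_rw [Finset.sum_sub_distrib, htelescope]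
    convert ((hshift x).sub_const (g x)).sub ((hshift y).sub_const (g y)) using 2
    ring
  have hsum_ge : d x - d y ≤ g y - g x := by
    refine ge_of_tendsto hsum ((eventually_ge_atTop 1).mono fun N hN => ?_)
    simpa using Finset.single_le_sum (fun n _ => (hpos n).le) (Finset.mem_range.2 hN)
  have hfirst_term_pos : 0 < d x - d y := by simpa using hpos 0
  linarith

theorem StrictMonoOn.lt_of_tendsto_atTop {g : ℝ → ℝ} {a l x : ℝ} (hg : StrictMonoOn g (Ioi a))
    (hl : Tendsto g atTop (𝓝 l)) (hx : a < x) : g x < l := by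
  have hx1 : x + 1 ∈ Ioi a := mem_Ioi.2 (by linarith)
  refine (hg hx hx1 (lt_add_one x)).trans_le <|
    ge_of_tendsto hl ((eventually_ge_atTop (x + 1)).mono fun y hy => ?_)
  exact hg.monotoneOn hx1 (mem_Ioi.2 (by linarith)) hy

theorem stmt17 :
    StrictMonoOn (fun x : ℝ => realDigamma (1 + x) - Real.log x - 1 / (2 * x)) (Set.Ioi 0) ∧
    Tendsto (fun x : ℝ => realDigamma (1 + x) - Real.log x - 1 / (2 * x)) atTop (nhds 0) ∧
    ∀ x : ℝ, 0 < x → realDigamma (1 + x) < Real.log x + 1 / (2 * x) := by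
  have hmono : StrictMonoOn digammaAsymptoticError (Ioi 0) :=
    strictMonoOn_of_tendsto_of_strictAntiOn_fwdDiff tendsto_digammaAsymptoticError_atTop <|
      strictAntiOn_trapezoid_sub_integral_inv.congr fun x hx =>
        (fwdDiff_digammaAsymptoticError hx).symm
  refine ⟨hmono, tendsto_digammaAsymptoticError_atTop, fun x hx => ?_⟩
  have := hmono.lt_of_tendsto_atTop tendsto_digammaAsymptoticError_atTop hx
  rw [digammaAsymptoticError] at this
  linarith
end

section
/- Let f : (0,∞) → ℝ be continuous with f(v) = O(v^{k}) (k > 0) as v → 0⁺ and f(v) - e₁·v^{-2}·log v - e₀·v^{-2} = O(v^{-3}·log v) as v → ∞, for constants e₀, e₁ ∈ ℝ. Then the function ζ(s) = ∫₀^∞ v^{-2s}·f(v) dv, defined and holomorphic for -1/2 < Re(s) < (k+1)/2, extends meromorphically to a neighborhood of s = -1/2 with Laurent expansion ζ(s) = (e₁/4)/(s+1/2)² + (e₀/2)/(s+1/2) + c₀ + O(s+1/2), where c₀ = ∫₀^1 v·f(v) dv + ∫₁^∞ v·(f(v) - e₁·v^{-2}·log v - e₀·v^{-2}) dv. -/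
/-!
As a function of the Mellin variable `1 - 2s`, `ζ(s) = ∫₀^∞ v^(-2s) f(v) dv` is the Mellin
transform of `f`. Split `f` at `v = 1`. On `(0, 1]` the bound `f = O(v^k)` makes the Mellin
transform holomorphic for `Re s < (k + 1)/2`. On `(1, ∞)` subtract `e₁ v⁻² log v + e₀ v⁻²`: the
remainder is `O(v^(-5/2))`, so its Mellin transform is holomorphic for `Re s > -3/4`, while the
subtracted terms have the explicit transforms `∫₁^∞ v^(-2s-2) log v dv = 1/(4(s + 1/2)²)` and
`∫₁^∞ v^(-2s-2) dv = 1/(2(s + 1/2))`, which form the principal part. At `s = -1/2` the regular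
part is the Mellin transform at `2`, i.e. the first moment `∫ v f(v) dv` of the two pieces.
-/

open Filter Asymptotics MeasureTheory Set Topology

section MellinIndicator

variable {E : Type*} [NormedAddCommGroup E] {F : ℝ → E} {S : Set ℝ}

theorem mellin_indicator [NormedSpace ℂ E] (hS : MeasurableSet S) (hS0 : S ⊆ Ioi 0) (s : ℂ) :
    mellin (S.indicator F) s = ∫ t in S, (t : ℂ) ^ (s - 1) • F t := by
  rw [mellin, ← indicator_smul, setIntegral_indicator hS, inter_eq_right.mpr hS0]

theorem mellinConvergent_indicator_iff [NormedSpace ℂ E] (hS : MeasurableSet S)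
    (hS0 : S ⊆ Ioi 0) {s : ℂ} :
    MellinConvergent (S.indicator F) s ↔ IntegrableOn (fun t : ℝ => (t : ℂ) ^ (s - 1) • F t) S := by
  rw [MellinConvergent, ← indicator_smul, IntegrableOn, integrable_indicator_iff hS,
    IntegrableOn, Measure.restrict_restrict hS, inter_eq_left.mpr hS0]
  rfl

theorem indicator_Ioc_isBigO_atTop (F : ℝ → E) (c : ℝ) :
    (Ioc (0 : ℝ) 1).indicator F =O[atTop] (· ^ (-c)) := by
  refine (isBigO_zero _ _).congr' ?_ EventuallyEq.rfl
  filter_upwards [eventually_gt_atTop 1] with t ht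
  exact (indicator_of_notMem (fun h => ht.not_ge h.2) _).symm

theorem indicator_Ioi_isBigO_nhdsGT (F : ℝ → E) (c : ℝ) :
    (Ioi (1 : ℝ)).indicator F =O[𝓝[>] 0] (· ^ (-c)) := by
  refine (isBigO_zero _ _).congr' ?_ EventuallyEq.rfl
  filter_upwards [Ioo_mem_nhdsGT one_pos] with t ht
  exact (indicator_of_notMem (fun h => ht.2.not_gt h) _).symm

theorem Asymptotics.IsBigO.indicator_Ioc {g : ℝ → ℝ} (h : F =O[𝓝[>] 0] g) :
    (Ioc (0 : ℝ) 1).indicator F =O[𝓝[>] 0] g := by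
  refine h.congr' ?_ EventuallyEq.rfl
  filter_upwards [Ioo_mem_nhdsGT one_pos] with t ht
  exact (indicator_of_mem (show t ∈ Ioc 0 1 from ⟨ht.1, ht.2.le⟩) _).symm

theorem Asymptotics.IsBigO.indicator_Ioi {g : ℝ → ℝ} (h : F =O[atTop] g) :
    (Ioi (1 : ℝ)).indicator F =O[atTop] g := by
  refine h.congr' ?_ EventuallyEq.rfl
  filter_upwards [eventually_gt_atTop 1] with t ht
  exact (indicator_of_mem ht _).symm

theorem MeasureTheory.LocallyIntegrableOn.indicator {T : Set ℝ} (hF : LocallyIntegrableOn F T)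
    (hS : MeasurableSet S) : LocallyIntegrableOn (S.indicator F) T := fun x hx => by
  obtain ⟨u, hu, hi⟩ := hF x hx
  exact ⟨u, hu, hi.indicator hS⟩

theorem locallyIntegrableOn_ofReal {g : ℝ → ℝ} {T : Set ℝ} (hg : ContinuousOn g T)
    (hT : MeasurableSet T) : LocallyIntegrableOn (fun v => (g v : ℂ)) T :=
  (Complex.continuous_ofReal.comp_continuousOn hg).locallyIntegrableOn hT

variable [NormedSpace ℂ E] {a b : ℝ} {s : ℂ}

theorem mellinConvergent_indicator_Ioc (hF : LocallyIntegrableOn F (Ioi 0))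
    (h0 : F =O[𝓝[>] 0] (· ^ (-b))) (hs : b < s.re) :
    MellinConvergent ((Ioc 0 1).indicator F) s :=
  mellinConvergent_of_isBigO_rpow (hF.indicator measurableSet_Ioc)
    (indicator_Ioc_isBigO_atTop F _) (lt_add_one s.re) h0.indicator_Ioc hs

theorem differentiableAt_mellin_indicator_Ioc (hF : LocallyIntegrableOn F (Ioi 0))
    (h0 : F =O[𝓝[>] 0] (· ^ (-b))) (hs : b < s.re) :
    DifferentiableAt ℂ (mellin ((Ioc 0 1).indicator F)) s :=
  mellin_differentiableAt_of_isBigO_rpow (hF.indicator measurableSet_Ioc)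
    (indicator_Ioc_isBigO_atTop F _) (lt_add_one s.re) h0.indicator_Ioc hs

theorem mellinConvergent_indicator_Ioi (hF : LocallyIntegrableOn F (Ioi 0))
    (htop : F =O[atTop] (· ^ (-a))) (hs : s.re < a) :
    MellinConvergent ((Ioi 1).indicator F) s :=
  mellinConvergent_of_isBigO_rpow (hF.indicator measurableSet_Ioi) htop.indicator_Ioi hs
    (indicator_Ioi_isBigO_nhdsGT F _) (sub_one_lt s.re)

theorem differentiableAt_mellin_indicator_Ioi (hF : LocallyIntegrableOn F (Ioi 0))
    (htop : F =O[atTop] (· ^ (-a))) (hs : s.re < a) :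
    DifferentiableAt ℂ (mellin ((Ioi 1).indicator F)) s :=
  mellin_differentiableAt_of_isBigO_rpow (hF.indicator measurableSet_Ioi) htop.indicator_Ioi hs
    (indicator_Ioi_isBigO_nhdsGT F _) (sub_one_lt s.re)

end MellinIndicator

section HasMellin

variable {E : Type*} [NormedAddCommGroup E] [NormedSpace ℂ E] {f g : ℝ → E} {s : ℂ} {m n : E}

theorem MellinConvergent.hasMellin (hf : MellinConvergent f s) : HasMellin f s (mellin f s) :=
  ⟨hf, rfl⟩

theorem HasMellin.add (hf : HasMellin f s m) (hg : HasMellin g s n) :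
    HasMellin (fun t => f t + g t) s (m + n) := by
  simpa only [hf.2, hg.2] using hasMellin_add hf.1 hg.1

theorem HasMellin.const_smul (hf : HasMellin f s m) {R : Type*} [NormedRing R] [Module R E]
    [IsBoundedSMul R E] [SMulCommClass ℂ R E] (c : R) :
    HasMellin (fun t => c • f t) s (c • m) := by
  simpa only [hf.2] using hasMellin_const_smul hf.1 c

theorem mellin_congr (h : EqOn f g (Ioi 0)) (s : ℂ) : mellin f s = mellin g s :=
  setIntegral_congr_fun measurableSet_Ioi fun t ht => by rw [h ht]

end HasMellin

theorem isBigO_ofReal_cpow_atTop (b : ℂ) :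
    (fun t : ℝ => (t : ℂ) ^ b) =O[atTop] (· ^ b.re) := by
  refine IsBigO.of_bound 1 ?_
  filter_upwards [eventually_gt_atTop 0] with t ht
  rw [Complex.norm_cpow_eq_rpow_re_of_pos ht, Real.norm_of_nonneg (by positivity), one_mul]

theorem tendsto_ofReal_cpow_atTop {b : ℂ} (hb : b.re < 0) :
    Tendsto (fun t : ℝ => (t : ℂ) ^ b) atTop (𝓝 0) :=
  (isBigO_ofReal_cpow_atTop b).trans_tendsto
    (by simpa only [neg_neg] using tendsto_rpow_neg_atTop (y := -b.re) (by linarith))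

theorem tendsto_ofReal_cpow_mul_log_atTop {b : ℂ} (hb : b.re < 0) :
    Tendsto (fun t : ℝ => (t : ℂ) ^ b * Real.log t) atTop (𝓝 0) := by
  have h := isBigO_rpow_top_log_smul (a := -b.re) (b := -b.re / 2) (by linarith)
    (by simpa only [neg_neg] using isBigO_ofReal_cpow_atTop b)
  refine (h.trans_tendsto (tendsto_rpow_neg_atTop (by linarith))).congr fun t => ?_
  rw [Complex.real_smul, mul_comm]

theorem hasMellin_one_Ioi {s : ℂ} (hs : s.re < 0) :
    HasMellin ((Ioi 1).indicator fun _ => (1 : ℂ)) s (-1 / s) := by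
  have hs' : (s - 1).re < -1 := by rw [Complex.sub_re, Complex.one_re]; linarith
  have hS0 : Ioi (1 : ℝ) ⊆ Ioi 0 := Ioi_subset_Ioi zero_le_one
  refine ⟨(mellinConvergent_indicator_iff measurableSet_Ioi hS0).mpr ?_, ?_⟩
  · simpa only [smul_eq_mul, mul_one] using integrableOn_Ioi_cpow_of_lt hs' one_pos
  · simp_rw [mellin_indicator measurableSet_Ioi hS0, smul_eq_mul, mul_one,
      integral_Ioi_cpow_of_lt hs' one_pos, sub_add_cancel, Complex.ofReal_one, Complex.one_cpow]

theorem hasMellin_cpow_Ioi (a : ℂ) {s : ℂ} (hs : s.re + a.re < 0) :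
    HasMellin ((Ioi 1).indicator fun t => (t : ℂ) ^ a) s (-1 / (s + a)) := by
  have := hasMellin_one_Ioi (by rwa [Complex.add_re] : (s + a).re < 0)
  simp_rw [HasMellin, ← MellinConvergent.cpow_smul, ← mellin_cpow_smul, ← indicator_smul,
    smul_eq_mul, mul_one] at this
  exact this

theorem hasMellin_log_Ioi {s : ℂ} (hs : s.re < 0) :
    HasMellin ((Ioi 1).indicator fun t => (Real.log t : ℂ)) s (1 / s ^ 2) := by
  have hS0 : Ioi (1 : ℝ) ⊆ Ioi 0 := Ioi_subset_Ioi zero_le_one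
  have hs0 : s ≠ 0 := fun h => by simp [h] at hs
  have hloc : LocallyIntegrableOn (fun t : ℝ => (Real.log t : ℂ)) (Ioi 0) :=
    locallyIntegrableOn_ofReal (Real.continuousOn_log.mono fun t ht => ht.out.ne') measurableSet_Ioi
  have hlog : (fun t : ℝ => (Real.log t : ℂ)) =O[atTop] (· ^ (-(s.re / 2))) :=
    Complex.isBigO_ofReal_left.mpr (isLittleO_log_rpow_atTop (by linarith)).isBigO
  have hconv := mellinConvergent_indicator_Ioi (s := s) hloc hlog (by linarith)
  refine ⟨hconv, ?_⟩
  rw [mellinConvergent_indicator_iff measurableSet_Ioi hS0] at hconv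
  rw [mellin_indicator measurableSet_Ioi hS0]
  set G : ℝ → ℂ := fun t => (t : ℂ) ^ s / s * (Real.log t - 1 / s)
  have hderiv : ∀ t ∈ Ici (1 : ℝ), HasDerivAt G ((t : ℂ) ^ (s - 1) • (Real.log t : ℂ)) t := by
    intro t ht
    have ht0 : t ≠ 0 := by linarith [ht.out]
    have hlog' : HasDerivAt (fun y : ℝ => (Real.log y : ℂ)) ((t⁻¹ : ℝ) : ℂ) t :=
      (Real.hasDerivAt_log ht0).ofReal_comp
    refine (((hasDerivAt_ofReal_cpow_const ht0 hs0).div_const s).mul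
      (hlog'.sub_const (1 / s))).congr_deriv ?_
    rw [Complex.cpow_sub _ _ (Complex.ofReal_ne_zero.mpr ht0), Complex.cpow_one,
      Complex.ofReal_inv, smul_eq_mul]
    field_simp
    ring
  have htend : Tendsto G atTop (𝓝 0) := by
    have h := ((tendsto_ofReal_cpow_mul_log_atTop hs).sub
      ((tendsto_ofReal_cpow_atTop hs).mul_const (1 / s))).div_const s
    simp only [zero_mul, zero_div, sub_zero] at h
    exact h.congr fun t => by simp only [G]; ring
  rw [integral_Ioi_of_hasDerivAt_of_tendsto' hderiv hconv htend]
  simp only [G, Complex.ofReal_one, Complex.one_cpow, Real.log_one, Complex.ofReal_zero]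
  field_simp
  ring

theorem hasMellin_cpow_mul_log_Ioi (a : ℂ) {s : ℂ} (hs : s.re + a.re < 0) :
    HasMellin ((Ioi 1).indicator fun t => (t : ℂ) ^ a * Real.log t) s (1 / (s + a) ^ 2) := by
  have := hasMellin_log_Ioi (by rwa [Complex.add_re] : (s + a).re < 0)
  simp_rw [HasMellin, ← MellinConvergent.cpow_smul, ← mellin_cpow_smul, ← indicator_smul,
    smul_eq_mul] at this
  exact this

theorem mellin_indicator_ofReal_two {S : Set ℝ} (hS : MeasurableSet S) (hS0 : S ⊆ Ioi 0)
    (f : ℝ → ℝ) : mellin (S.indicator fun t => (f t : ℂ)) 2 = ((∫ t in S, t * f t : ℝ) : ℂ) := by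
  rw [mellin_indicator hS hS0, ← integral_complex_ofReal]
  norm_num

section LogPowerExpansion

variable {f : ℝ → ℝ} {k e₀ e₁ : ℝ}

noncomputable def tailRemainder (e₀ e₁ : ℝ) (f : ℝ → ℝ) (v : ℝ) : ℝ :=
  f v - e₁ * v ^ (-(2 : ℝ)) * Real.log v - e₀ * v ^ (-(2 : ℝ))

noncomputable def regularPart (e₀ e₁ : ℝ) (f : ℝ → ℝ) (s : ℂ) : ℂ :=
  mellin ((Ioc 0 1).indicator fun v => (f v : ℂ)) (1 - 2 * s) +
    mellin ((Ioi 1).indicator fun v => (tailRemainder e₀ e₁ f v : ℂ)) (1 - 2 * s)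

theorem continuousOn_tailRemainder (hc : ContinuousOn f (Ioi 0)) :
    ContinuousOn (tailRemainder e₀ e₁ f) (Ioi 0) := by
  have hpow : ContinuousOn (fun v : ℝ => v ^ (-(2 : ℝ))) (Ioi 0) :=
    continuousOn_id.rpow_const fun v hv => Or.inl hv.out.ne'
  have hlog : ContinuousOn Real.log (Ioi 0) := Real.continuousOn_log.mono fun v hv => hv.out.ne'
  unfold tailRemainder
  fun_prop

theorem isBigO_tailRemainder
    (hinf : tailRemainder e₀ e₁ f =O[atTop] fun v => v ^ (-(3 : ℝ)) * Real.log v) :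
    (fun v => (tailRemainder e₀ e₁ f v : ℂ)) =O[atTop] (· ^ (-(5 / 2 : ℝ))) := by
  have h := isBigO_rpow_top_log_smul (b := 5 / 2) (by norm_num)
    (isBigO_refl (fun v : ℝ => v ^ (-(3 : ℝ))) atTop)
  simp only [smul_eq_mul, mul_comm (Real.log _)] at h
  exact Complex.isBigO_ofReal_left.mpr (hinf.trans h)

theorem analyticAt_regularPart (hc : ContinuousOn f (Ioi 0)) (h0 : f =O[𝓝[>] 0] fun v => v ^ k)
    (hinf : tailRemainder e₀ e₁ f =O[atTop] fun v => v ^ (-(3 : ℝ)) * Real.log v) {s : ℂ}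
    (hs₁ : -(3 / 4) < s.re) (hs₂ : s.re < (k + 1) / 2) :
    AnalyticAt ℂ (regularPart e₀ e₁ f) s := by
  have hf_zero : (fun v => (f v : ℂ)) =O[𝓝[>] 0] (· ^ (-(-k))) :=
    Complex.isBigO_ofReal_left.mpr (by simpa only [neg_neg] using h0)
  have hU : IsOpen (Complex.re ⁻¹' Ioo (-(3 / 4)) ((k + 1) / 2)) :=
    isOpen_Ioo.preimage Complex.continuous_re
  refine DifferentiableOn.analyticAt (fun z hz => ?_) (hU.mem_nhds ⟨hs₁, hs₂⟩)
  have hw : (1 - 2 * z).re = 1 - 2 * z.re := by simp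
  have hd₀ := differentiableAt_mellin_indicator_Ioc (s := 1 - 2 * z)
    (locallyIntegrableOn_ofReal hc measurableSet_Ioi) hf_zero
    (by rw [hw]; linarith [hz.2])
  have hd₁ := differentiableAt_mellin_indicator_Ioi (s := 1 - 2 * z)
    (locallyIntegrableOn_ofReal (continuousOn_tailRemainder hc) measurableSet_Ioi)
    (isBigO_tailRemainder hinf) (by rw [hw]; linarith [hz.1])
  have hinner : DifferentiableAt ℂ (fun z : ℂ => 1 - 2 * z) z := by fun_prop
  exact ((hd₀.comp z hinner).add (hd₁.comp z hinner)).differentiableWithinAt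

theorem regularPart_neg_half :
    regularPart e₀ e₁ f (-(1 / 2)) =
      (((∫ v in Ioc (0 : ℝ) 1, v * f v) +
        ∫ v in Ioi (1 : ℝ), v * tailRemainder e₀ e₁ f v : ℝ) : ℂ) := by
  rw [regularPart, show (1 : ℂ) - 2 * -(1 / 2) = 2 by norm_num,
    mellin_indicator_ofReal_two measurableSet_Ioc Ioc_subset_Ioi_self,
    mellin_indicator_ofReal_two measurableSet_Ioi (Ioi_subset_Ioi zero_le_one)]
  push_cast
  rfl

theorem ofReal_eqOn_split_at_one :
    EqOn (fun v => (f v : ℂ))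
      (fun v => (Ioc 0 1).indicator (fun v => (f v : ℂ)) v +
        (Ioi 1).indicator (fun v => (tailRemainder e₀ e₁ f v : ℂ)) v +
        e₁ • (Ioi 1).indicator (fun t : ℝ => (t : ℂ) ^ (-2 : ℂ) * Real.log t) v +
        e₀ • (Ioi 1).indicator (fun t : ℝ => (t : ℂ) ^ (-2 : ℂ)) v) (Ioi 0) := by
  intro v hv
  rcases le_or_gt v 1 with hv₁ | hv₁
  · simp [hv.out, hv₁]
  · dsimp only
    simp only [indicator_of_notMem (fun h : v ∈ Ioc 0 1 => hv₁.not_ge h.2),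
      indicator_of_mem (mem_Ioi.mpr hv₁), tailRemainder, Complex.real_smul]
    push_cast [Complex.ofReal_cpow hv.out.le]
    ring

theorem integral_cpow_mul_eq_regularPart (hc : ContinuousOn f (Ioi 0))
    (h0 : f =O[𝓝[>] 0] fun v => v ^ k)
    (hinf : tailRemainder e₀ e₁ f =O[atTop] fun v => v ^ (-(3 : ℝ)) * Real.log v) {s : ℂ}
    (hs₁ : -(1 / 2) < s.re) (hs₂ : s.re < (k + 1) / 2) :
    ∫ v in Ioi (0 : ℝ), (v : ℂ) ^ (-2 * s) * (f v : ℂ) =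
      (e₁ : ℂ) / 4 / (s + 1 / 2) ^ 2 + (e₀ : ℂ) / 2 / (s + 1 / 2) + regularPart e₀ e₁ f s := by
  set w := 1 - 2 * s
  have hw : w.re = 1 - 2 * s.re := by simp [w]
  have hw₂ : w.re + (-2 : ℂ).re < 0 := by
    rw [hw, Complex.neg_re, Complex.re_ofNat]; linarith
  have hf_zero : (fun v => (f v : ℂ)) =O[𝓝[>] 0] (· ^ (-(-k))) :=
    Complex.isBigO_ofReal_left.mpr (by simpa only [neg_neg] using h0)
  have hf_loc := locallyIntegrableOn_ofReal hc measurableSet_Ioi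
  have hR_loc := locallyIntegrableOn_ofReal (continuousOn_tailRemainder (e₀ := e₀) (e₁ := e₁) hc)
    measurableSet_Ioi
  have hsplit :=
    (((mellinConvergent_indicator_Ioc (s := w) hf_loc hf_zero (by linarith)).hasMellin.add
      (mellinConvergent_indicator_Ioi (s := w) hR_loc (isBigO_tailRemainder hinf)
        (by linarith)).hasMellin).add
      ((hasMellin_cpow_mul_log_Ioi (-2) (s := w) hw₂).const_smul e₁)).add
      ((hasMellin_cpow_Ioi (-2) (s := w) hw₂).const_smul e₀)
  have hmellin : ∫ v in Ioi (0 : ℝ), (v : ℂ) ^ (-2 * s) * (f v : ℂ) =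
      mellin (fun v => (f v : ℂ)) w := by
    simp only [mellin, w, smul_eq_mul, sub_sub_cancel_left, neg_mul]
  rw [hmellin, mellin_congr ofReal_eqOn_split_at_one, hsplit.2, regularPart,
    show w + -2 = -(2 * (s + 1 / 2)) by ring, Complex.real_smul, Complex.real_smul]
  generalize s + 1 / 2 = x
  ring

end LogPowerExpansion

theorem stmt18 (f : ℝ → ℝ) (hc : ContinuousOn f (Set.Ioi 0)) (k : ℝ) (hk : 0 < k)
    (e₀ e₁ : ℝ)
    (h0 : f =O[nhdsWithin 0 (Set.Ioi 0)] fun v : ℝ => v ^ k)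
    (hinf : (fun v : ℝ => f v - e₁ * v ^ (-(2 : ℝ)) * Real.log v - e₀ * v ^ (-(2 : ℝ)))
      =O[atTop] fun v : ℝ => v ^ (-(3 : ℝ)) * Real.log v) :
    ∃ g : ℂ → ℂ, AnalyticAt ℂ g (-(1 / 2)) ∧
      g (-(1 / 2)) =
        (((∫ v in Set.Ioc (0 : ℝ) 1, v * f v) +
          ∫ v in Set.Ioi (1 : ℝ),
            v * (f v - e₁ * v ^ (-(2 : ℝ)) * Real.log v - e₀ * v ^ (-(2 : ℝ))) : ℝ) : ℂ) ∧
      ∀ s : ℂ, -(1 / 2) < s.re → s.re < (k + 1) / 2 →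
        (∫ v in Set.Ioi (0 : ℝ), (v : ℂ) ^ (-2 * s) * (f v : ℂ)) =
          ((e₁ : ℂ) / 4) / (s + 1 / 2) ^ 2 + ((e₀ : ℂ) / 2) / (s + 1 / 2) + g s :=
  ⟨regularPart e₀ e₁ f,
    analyticAt_regularPart hc h0 hinf (by norm_num) (by norm_num; linarith),
    regularPart_neg_half,
    fun _ hs₁ hs₂ => integral_cpow_mul_eq_regularPart hc h0 hinf hs₁ hs₂⟩
end
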